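/- arXiv:1012.1795 — 7 statements merged into one kernel-verified Lean document; each statement's English description precedes it below -/
import Mathlib

section
/- Let ζ = e^{iπ/6} ∈ ℂ and consider the matrices a = [[ζ, 0],[0, ζ⁻¹]], b = [[i, -((1+√5)/2)·i],[0, -i]], c = [[0, i],[i, 0]] in SL₂(ℂ). Then the images of c·a, c·b⁻¹ and a·b in PSL₂(ℂ) have orders exactly 2, 5 and 3 respectively. -/
open Matrix Complex

/-- `SL₂(ℂ)`: 2×2 complex matrices of determinant 1. -/
abbrev SL2C := Matrix.SpecialLinearGroup (Fin 2) ℂ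

/-- `PSL₂(ℂ)`: the quotient of `SL₂(ℂ)` by its center `{±I}`. -/
abbrev PSL2C := SL2C ⧸ Subgroup.center SL2C

/-- The image in `PSL₂(ℂ)` of an element of `SL₂(ℂ)`. -/
abbrev toPSL (M : SL2C) : PSL2C := QuotientGroup.mk M

lemma toPSL_eq_one_iff (M : SL2C) :
    toPSL M = 1 ↔ ∃ r : ℂ, r ^ 2 = 1 ∧ Matrix.scalar (Fin 2) r = (M : Matrix (Fin 2) (Fin 2) ℂ) := by
  rw [show toPSL M = 1 ↔ M ∈ Subgroup.center SL2C from QuotientGroup.eq_one_iff M,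
    Matrix.SpecialLinearGroup.mem_center_iff]
  simp

lemma toPSL_ne_one (M : SL2C) (h : (M : Matrix (Fin 2) (Fin 2) ℂ) 0 1 ≠ 0) : toPSL M ≠ 1 := by
  intro h1
  rw [toPSL_eq_one_iff] at h1
  obtain ⟨r, -, hr⟩ := h1
  apply h
  rw [← hr]
  simp [Matrix.scalar_apply]

lemma order_prime (M : SL2C) (p : ℕ) (hp : p.Prime)
    (hpow : (M : Matrix (Fin 2) (Fin 2) ℂ) ^ p = 1 ∨ (M : Matrix (Fin 2) (Fin 2) ℂ) ^ p = -1)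
    (hne : (M : Matrix (Fin 2) (Fin 2) ℂ) 0 1 ≠ 0) : orderOf (toPSL M) = p := by
  have : Fact p.Prime := ⟨hp⟩
  apply orderOf_eq_prime
  · have h1 : toPSL (M ^ p) = 1 := by
      rw [toPSL_eq_one_iff]
      rcases hpow with h | h
      · exact ⟨1, by norm_num, by simp [Matrix.SpecialLinearGroup.coe_pow, h,
          Matrix.scalar_apply, Matrix.diagonal_one]⟩
      · refine ⟨-1, by norm_num, ?_⟩
        rw [Matrix.SpecialLinearGroup.coe_pow, h, Matrix.scalar_apply]
        ext i j
        fin_cases i <;> fin_cases j <;> simp [Matrix.diagonal]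
    simpa using h1
  · exact toPSL_ne_one M hne

theorem stmt_1
    (ζ : ℂ) (hζ : ζ = Complex.exp (Real.pi * Complex.I / 6))
    (A B C : Matrix (Fin 2) (Fin 2) ℂ)
    (hA : A = !![ζ, 0; 0, ζ⁻¹])
    (hB : B = !![Complex.I, -(((1 + Real.sqrt 5) / 2 : ℝ) : ℂ) * Complex.I; 0, -Complex.I])
    (hC : C = !![0, Complex.I; Complex.I, 0])
    (hdA : A.det = 1) (hdB : B.det = 1) (hdC : C.det = 1) :
    orderOf (toPSL ⟨C, hdC⟩ * toPSL ⟨A, hdA⟩) = 2 ∧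
    orderOf (toPSL ⟨C, hdC⟩ * (toPSL ⟨B, hdB⟩)⁻¹) = 5 ∧
    orderOf (toPSL ⟨A, hdA⟩ * toPSL ⟨B, hdB⟩) = 3 := by
  -- basic scalar facts
  have hζ3 : ζ ^ 3 = Complex.I := by
    rw [hζ, ← Complex.exp_nat_mul]
    rw [show (3 : ℕ) * (↑Real.pi * Complex.I / 6) = (Real.pi / 2 : ℝ) * Complex.I by
      push_cast; ring, Complex.exp_mul_I]
    simp
  have hζ0 : ζ ≠ 0 := by rw [hζ]; exact Complex.exp_ne_zero _
  have hζ6 : ζ ^ 6 = -1 := by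
    calc ζ ^ 6 = (ζ ^ 3) ^ 2 := by ring
    _ = -1 := by rw [hζ3, Complex.I_sq]
  have hinv : ζ⁻¹ = -ζ ^ 5 := by
    field_simp
    linear_combination hζ6
  have hI : Complex.I = ζ ^ 3 := hζ3.symm
  have hval : ζ = ((Real.sqrt 3 : ℝ) + Complex.I) / 2 := by
    rw [hζ, show (Real.pi : ℂ) * Complex.I / 6 = (Real.pi / 6 : ℝ) * Complex.I by
      push_cast; ring, Complex.exp_mul_I]
    rw [show Complex.cos ((Real.pi / 6 : ℝ) : ℂ) = ((Real.cos (Real.pi / 6) : ℝ) : ℂ) from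
      (Complex.ofReal_cos _).symm]
    rw [show Complex.sin ((Real.pi / 6 : ℝ) : ℂ) = ((Real.sin (Real.pi / 6) : ℝ) : ℂ) from
      (Complex.ofReal_sin _).symm]
    rw [Real.cos_pi_div_six, Real.sin_pi_div_six]
    push_cast
    ring
  have hs3 : ((Real.sqrt 3 : ℝ) : ℂ) ^ 2 = 3 := by
    rw [show ((Real.sqrt 3 : ℝ) : ℂ) ^ 2 = ((Real.sqrt 3 ^ 2 : ℝ) : ℂ) by push_cast; ring]
    rw [Real.sq_sqrt (by norm_num : (3:ℝ) ≥ 0)]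
    norm_num
  have hmin : ζ ^ 4 - ζ ^ 2 + 1 = 0 := by
    rw [hval]
    set s : ℂ := ((Real.sqrt 3 : ℝ) : ℂ)
    linear_combination ((s^2 - 3 + 4*s*Complex.I)/16 - 1/4) * hs3 +
      ((6*s^2 - 1 + 4*s*Complex.I + Complex.I^2)/16 - 1/4) * Complex.I_sq
  set φ : ℂ := (((1 + Real.sqrt 5) / 2 : ℝ) : ℂ) with hφdef
  have h5 : ((Real.sqrt 5 : ℝ) : ℂ) ^ 2 = 5 := by
    rw [show ((Real.sqrt 5 : ℝ) : ℂ) ^ 2 = ((Real.sqrt 5 ^ 2 : ℝ) : ℂ) by push_cast; ring]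
    rw [Real.sq_sqrt (by norm_num : (5:ℝ) ≥ 0)]
    norm_num
  have hφ : φ ^ 2 = φ + 1 := by
    rw [hφdef]
    push_cast
    linear_combination h5 / 4
  have hφ0 : φ ≠ 0 := by
    rw [hφdef]
    simp only [ne_eq, Complex.ofReal_eq_zero]
    positivity
  -- matrix computations
  have hP : C * A = !![0, ζ^2; ζ^4, 0] := by
    rw [hA, hC, Matrix.mul_fin_two]
    ext i j
    fin_cases i <;> fin_cases j <;> simp [hI, hinv] <;>
      first
        | ring1
        | linear_combination (-ζ^2) * hζ6
        | linear_combination (ζ^2) * hζ6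
  have hP2 : (!![0, ζ^2; ζ^4, 0] : Matrix (Fin 2) (Fin 2) ℂ) ^ 2 = -1 := by
    rw [pow_two, Matrix.mul_fin_two]
    ext i j
    fin_cases i <;> fin_cases j <;> simp [Matrix.one_apply] <;>
      first
        | ring1
        | linear_combination hζ6
  have hN : A * B = !![ζ^4, -φ*ζ^4; 0, -ζ^2] := by
    rw [hA, hB, Matrix.mul_fin_two]
    ext i j
    fin_cases i <;> fin_cases j <;> simp [hI, hinv] <;>
      first
        | ring1
        | linear_combination (ζ^2) * hζ6
        | linear_combination (-ζ^2) * hζ6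
        | linear_combination φ * ζ^2 * hζ6
        | linear_combination (-φ) * ζ^2 * hζ6
  have hN2 : (!![ζ^4, -φ*ζ^4; 0, -ζ^2] : Matrix (Fin 2) (Fin 2) ℂ) ^ 2
      = !![-ζ^2, φ*(ζ^2-1); 0, ζ^4] := by
    rw [pow_two, Matrix.mul_fin_two]
    ext i j
    fin_cases i <;> fin_cases j <;> simp <;>
      first
        | ring1
        | linear_combination (-ζ^2) * hζ6
        | linear_combination (ζ^2) * hζ6
        | linear_combination φ * (1 - ζ^2) * hζ6
        | linear_combination φ * (ζ^2 - 1) * hζ6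
  have hN3 : (!![-ζ^2, φ*(ζ^2-1); 0, ζ^4] : Matrix (Fin 2) (Fin 2) ℂ)
      * !![ζ^4, -φ*ζ^4; 0, -ζ^2] = 1 := by
    rw [Matrix.mul_fin_two]
    ext i j
    fin_cases i <;> fin_cases j <;> simp [Matrix.one_apply] <;>
      first
        | ring1
        | linear_combination (-1 : ℂ) * hζ6
        | linear_combination φ * hζ6 - φ * hmin
        | linear_combination (-φ) * hζ6 + φ * hmin
  -- the B⁻¹ computation
  have h1 : (((⟨B, hdB⟩ : SL2C)⁻¹ : SL2C) : Matrix (Fin 2) (Fin 2) ℂ)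
      = !![-Complex.I, φ*Complex.I; 0, Complex.I] := by
    set MB : SL2C := ⟨B, hdB⟩ with hMB
    rw [Matrix.SpecialLinearGroup.SL2_inv_expl]
    ext i j
    fin_cases i <;> fin_cases j <;> simp [hMB, hB, ← hφdef]
  have hM : C * !![-Complex.I, φ*Complex.I; 0, Complex.I] = !![0, -1; 1, -φ] := by
    rw [hC, Matrix.mul_fin_two]
    ext i j
    fin_cases i <;> fin_cases j <;> simp <;>
      first
        | ring1
        | linear_combination Complex.I_sq
        | linear_combination (-1 : ℂ) * Complex.I_sq
        | linear_combination φ * Complex.I_sq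
        | linear_combination (-φ) * Complex.I_sq
  have hM2 : (!![0, -1; 1, -φ] : Matrix (Fin 2) (Fin 2) ℂ) ^ 2 = !![-1, φ; -φ, φ] := by
    rw [pow_two, Matrix.mul_fin_two]
    ext i j
    fin_cases i <;> fin_cases j <;> simp <;>
      first
        | ring1
        | linear_combination hφ
        | linear_combination -hφ
  have hM4 : (!![-1, φ; -φ, φ] : Matrix (Fin 2) (Fin 2) ℂ) ^ 2 = !![-φ, 1; -1, 0] := by
    rw [pow_two, Matrix.mul_fin_two]
    ext i j
    fin_cases i <;> fin_cases j <;> simp <;>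
      first
        | ring1
        | linear_combination hφ
        | linear_combination -hφ
  have hM5 : (!![-φ, 1; -1, 0] : Matrix (Fin 2) (Fin 2) ℂ) * !![0, -1; 1, -φ] = 1 := by
    rw [Matrix.mul_fin_two]
    ext i j
    fin_cases i <;> fin_cases j <;> simp [Matrix.one_apply] <;>
      first
        | ring1
        | linear_combination hφ
        | linear_combination -hφ
  refine ⟨?_, ?_, ?_⟩
  · -- order of CA is 2
    apply order_prime _ 2 (by norm_num)
    · right
      show (C * A) ^ 2 = -1
      rw [hP, hP2]
    · show (C * A) 0 1 ≠ 0
      rw [hP]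
      simp [hζ0]
  · -- order of CB⁻¹ is 5
    apply order_prime _ 5 (by norm_num)
    · left
      beta_reduce
      set MC : SL2C := ⟨C, hdC⟩ with hMC
      set MB : SL2C := ⟨B, hdB⟩ with hMB
      rw [Matrix.SpecialLinearGroup.coe_mul, h1,
        show (MC : Matrix (Fin 2) (Fin 2) ℂ) = C from rfl]
      rw [hM, show (5:ℕ) = 2*2+1 from rfl, pow_succ, pow_mul, hM2, hM4, hM5]
    · beta_reduce
      set MC : SL2C := ⟨C, hdC⟩ with hMC
      set MB : SL2C := ⟨B, hdB⟩ with hMB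
      rw [Matrix.SpecialLinearGroup.coe_mul, h1,
        show (MC : Matrix (Fin 2) (Fin 2) ℂ) = C from rfl]
      rw [hM]
      simp
  · -- order of AB is 3
    apply order_prime _ 3 (by norm_num)
    · left
      show (A * B) ^ 3 = 1
      rw [hN, show (3:ℕ) = 2+1 from rfl, pow_succ, hN2, hN3]
    · show (A * B) 0 1 ≠ 0
      rw [hN]
      simp [hζ0, hφ0]
end

section
/- Let ζ = e^{iπ/6} ∈ ℂ and consider the matrices a = [[ζ, i],[0, ζ⁻¹]], b = [[ζ², -i],[0, ζ⁻²]], c = [[0, i],[i, 0]] in SL₂(ℂ). Then the images of c·a, c·b⁻¹ and a·b in PSL₂(ℂ) have orders exactly 3, 3 and 2 respectively. -/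
open Matrix Complex

set_option maxHeartbeats 1000000 in
theorem stmt_3
    (ζ : ℂ) (hζ : ζ = Complex.exp (Real.pi * Complex.I / 6))
    (A B C : Matrix (Fin 2) (Fin 2) ℂ)
    (hA : A = !![ζ, Complex.I; 0, ζ⁻¹])
    (hB : B = !![ζ ^ 2, -Complex.I; 0, (ζ ^ 2)⁻¹])
    (hC : C = !![0, Complex.I; Complex.I, 0])
    (hdA : A.det = 1) (hdB : B.det = 1) (hdC : C.det = 1) :
    orderOf (toPSL ⟨C, hdC⟩ * toPSL ⟨A, hdA⟩) = 3 ∧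
    orderOf (toPSL ⟨C, hdC⟩ * (toPSL ⟨B, hdB⟩)⁻¹) = 3 ∧
    orderOf (toPSL ⟨A, hdA⟩ * toPSL ⟨B, hdB⟩) = 2 := by
  have hz : ζ ≠ 0 := by rw [hζ]; exact Complex.exp_ne_zero _
  have hz2 : ζ ^ 2 ≠ 0 := pow_ne_zero _ hz
  have h3 : ζ ^ 3 = Complex.I := by
    rw [hζ, ← Complex.exp_nat_mul]
    rw [show ((3 : ℕ) : ℂ) * (↑Real.pi * Complex.I / 6) = (↑(Real.pi / 2) : ℂ) * Complex.I by
      push_cast; ring]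
    simp [Complex.exp_mul_I]
  have hI : Complex.I ^ 3 = -Complex.I := by rw [pow_succ, Complex.I_sq]; ring
  -- the three group elements
  set a : SL2C := ⟨A, hdA⟩
  set b : SL2C := ⟨B, hdB⟩
  set c : SL2C := ⟨C, hdC⟩
  have hcc : (c : Matrix (Fin 2) (Fin 2) ℂ) = C := rfl
  have hac : (a : Matrix (Fin 2) (Fin 2) ℂ) = A := rfl
  have hbinv : ((b⁻¹ : SL2C) : Matrix (Fin 2) (Fin 2) ℂ) = !![(ζ ^ 2)⁻¹, Complex.I; 0, ζ ^ 2] := by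
    rw [Matrix.SpecialLinearGroup.coe_inv]
    show Matrix.adjugate B = _
    rw [hB, Matrix.adjugate_fin_two]
    norm_num
  -- (ca)^3 = 1
  have hca : (c * a) ^ 3 = 1 := by
    apply Subtype.ext
    simp only [Matrix.SpecialLinearGroup.coe_pow, Matrix.SpecialLinearGroup.coe_mul,
      Matrix.SpecialLinearGroup.coe_one, hcc, hac]
    rw [hA, hC, pow_succ, pow_succ, pow_one]
    ext i j
    fin_cases i <;> fin_cases j <;>
      (simp [Matrix.mul_fin_two, Matrix.one_fin_two]; field_simp; ring_nf) <;>
      simp [Complex.I_sq, hI] <;> ring_nf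
  -- (c * b⁻¹)^3 = 1
  have hcb : (c * b⁻¹) ^ 3 = 1 := by
    apply Subtype.ext
    simp only [Matrix.SpecialLinearGroup.coe_pow, Matrix.SpecialLinearGroup.coe_mul,
      Matrix.SpecialLinearGroup.coe_one, hcc, hbinv]
    rw [hC, pow_succ, pow_succ, pow_one]
    ext i j
    fin_cases i <;> fin_cases j <;>
      (simp [Matrix.mul_fin_two, Matrix.one_fin_two]; field_simp; ring_nf) <;>
      simp [Complex.I_sq, hI] <;> ring_nf
  -- (ab)^2 = -1
  have hdN : (-1 : Matrix (Fin 2) (Fin 2) ℂ).det = 1 := by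
    simp [Matrix.det_neg]
  have hiI : (Complex.I)⁻¹ = -Complex.I := Complex.inv_I
  have hAB : A * B = !![Complex.I, Complex.I * ((ζ ^ 2)⁻¹ - ζ); 0, -Complex.I] := by
    rw [hA, hB, Matrix.mul_fin_two]
    ext i j
    fin_cases i <;> fin_cases j <;> simp
    · linear_combination h3
    · ring
    · field_simp
      linear_combination Complex.I * h3 + Complex.I_sq
  have hab : (a * b) ^ 2 = ⟨-1, hdN⟩ := by
    apply Subtype.ext
    simp only [Matrix.SpecialLinearGroup.coe_pow, Matrix.SpecialLinearGroup.coe_mul, hcc, hac]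
    show (A * B) ^ 2 = (-1 : Matrix (Fin 2) (Fin 2) ℂ)
    rw [hAB, pow_succ, pow_one,
      show (-1 : Matrix (Fin 2) (Fin 2) ℂ) = !![-1, 0; 0, -1] by
        ext i j; fin_cases i <;> fin_cases j <;> simp [Matrix.one_fin_two]]
    ext i j
    fin_cases i <;> fin_cases j <;> simp [Matrix.mul_fin_two] <;>
      first
      | linear_combination Complex.I_sq
      | linear_combination -Complex.I_sq
      | ring
  have hNcen : (⟨-1, hdN⟩ : SL2C) ∈ Subgroup.center SL2C := by
    apply Matrix.SpecialLinearGroup.mem_center_iff.mpr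
    refine ⟨-1, by norm_num, ?_⟩
    show _ = (-1 : Matrix (Fin 2) (Fin 2) ℂ)
    ext i j
    fin_cases i <;> fin_cases j <;> simp [Matrix.scalar]
  -- non-centrality
  have hca_ne : toPSL c * toPSL a ≠ 1 := by
    intro h
    rw [show toPSL c * toPSL a = toPSL (c * a) from rfl, QuotientGroup.eq_one_iff,
      Matrix.SpecialLinearGroup.mem_center_iff] at h
    obtain ⟨r, -, hr⟩ := h
    rw [Matrix.SpecialLinearGroup.coe_mul, hcc, hac] at hr
    have h10 := congrFun₂ hr 1 0
    simp [Matrix.scalar, hA, hC, Matrix.mul_fin_two] at h10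
    exact hz h10
  have hcb_ne : toPSL c * (toPSL b)⁻¹ ≠ 1 := by
    intro h
    rw [show toPSL c * (toPSL b)⁻¹ = toPSL (c * b⁻¹) from rfl, QuotientGroup.eq_one_iff,
      Matrix.SpecialLinearGroup.mem_center_iff] at h
    obtain ⟨r, -, hr⟩ := h
    rw [Matrix.SpecialLinearGroup.coe_mul, hcc, hbinv] at hr
    have h10 := congrFun₂ hr 1 0
    simp [Matrix.scalar, hC, Matrix.mul_fin_two] at h10
    exact hz h10
  have hab_ne : toPSL a * toPSL b ≠ 1 := by
    intro h
    rw [show toPSL a * toPSL b = toPSL (a * b) from rfl, QuotientGroup.eq_one_iff,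
      Matrix.SpecialLinearGroup.mem_center_iff] at h
    obtain ⟨r, -, hr⟩ := h
    rw [Matrix.SpecialLinearGroup.coe_mul, hac,
      show ((b : SL2C) : Matrix (Fin 2) (Fin 2) ℂ) = B from rfl] at hr
    have h00 := congrFun₂ hr 0 0
    have h11 := congrFun₂ hr 1 1
    simp [Matrix.scalar, hA, hB, Matrix.mul_fin_two] at h00 h11
    have h6 : ζ ^ 6 = 1 := by
      have h := h00.symm.trans h11
      field_simp at h
      linear_combination h
    have : (Complex.I : ℂ) ^ 2 = 1 := by
      rw [← h3, ← pow_mul]; exact h6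
    rw [Complex.I_sq] at this
    norm_num at this
  -- conclude
  have hfact3 : Fact (Nat.Prime 3) := ⟨by norm_num⟩
  have hfact2 : Fact (Nat.Prime 2) := ⟨by norm_num⟩
  refine ⟨?_, ?_, ?_⟩
  · refine orderOf_eq_prime ?_ hca_ne
    rw [show toPSL c * toPSL a = toPSL (c * a) from rfl, ← QuotientGroup.mk_pow, hca]
    rfl
  · refine orderOf_eq_prime ?_ hcb_ne
    rw [show toPSL c * (toPSL b)⁻¹ = toPSL (c * b⁻¹) from rfl, ← QuotientGroup.mk_pow, hcb]
    rfl
  · refine orderOf_eq_prime ?_ hab_ne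
    rw [show toPSL a * toPSL b = toPSL (a * b) from rfl, ← QuotientGroup.mk_pow, hab]
    exact (QuotientGroup.eq_one_iff _).mpr hNcen
end

section
/- Let ζ = e^{iπ/6} ∈ ℂ and consider the matrices a = [[ζ, i],[0, ζ⁻¹]], b = [[ζ², -√(-2)],[0, ζ⁻²]], c = [[0, i],[i, 0]], all of which have determinant 1 (here √(-2) denotes i·√2). Then the images of a, b, c in PSL₂(ℂ) have orders exactly 6, 3 and 2 respectively. -/
open Matrix Complex

lemma scalar_eq' (r : ℂ) : (Matrix.scalar (Fin 2)) r = r • (1 : Matrix (Fin 2) (Fin 2) ℂ) := by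
  rw [Matrix.smul_one_eq_diagonal]; rfl

lemma psl_one_iff (M : SL2C) : toPSL M = 1 ↔
    (M : Matrix (Fin 2) (Fin 2) ℂ) = 1 ∨ (M : Matrix (Fin 2) (Fin 2) ℂ) = -1 := by
  rw [toPSL, QuotientGroup.eq_one_iff, Matrix.SpecialLinearGroup.mem_center_iff]
  constructor
  · rintro ⟨r, hr, hs⟩
    simp only [Fintype.card_fin] at hr
    rw [scalar_eq'] at hs
    have h2 : (r - 1) * (r + 1) = 0 := by linear_combination hr
    rcases mul_eq_zero.mp h2 with h | h
    · left; rw [← hs, sub_eq_zero.mp h, one_smul]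
    · right; have hr1 : r = -1 := by linear_combination h
      rw [← hs, hr1, neg_smul, one_smul]
  · rintro (h | h)
    · exact ⟨1, by norm_num, by rw [scalar_eq', h, one_smul]⟩
    · exact ⟨-1, by norm_num, by rw [scalar_eq', h, neg_smul, one_smul]⟩

lemma psl_orderOf_eq (M : SL2C) {n : ℕ} (hn : 0 < n)
    (h1 : (M : Matrix (Fin 2) (Fin 2) ℂ) ^ n = 1 ∨ (M : Matrix (Fin 2) (Fin 2) ℂ) ^ n = -1)
    (h2 : ∀ m, m < n → 0 < m → (M : Matrix (Fin 2) (Fin 2) ℂ) ^ m ≠ 1 ∧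
      (M : Matrix (Fin 2) (Fin 2) ℂ) ^ m ≠ -1) :
    orderOf (toPSL M) = n := by
  rw [orderOf_eq_iff hn]
  constructor
  · rw [← QuotientGroup.mk_pow, psl_one_iff, Matrix.SpecialLinearGroup.coe_pow]
    exact h1
  · intro m hm hm0
    rw [Ne, ← QuotientGroup.mk_pow, psl_one_iff, Matrix.SpecialLinearGroup.coe_pow]
    rintro (h | h)
    · exact (h2 m hm hm0).1 h
    · exact (h2 m hm hm0).2 h

theorem stmt_4
    (ζ : ℂ) (hζ : ζ = Complex.exp (Real.pi * Complex.I / 6))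
    (A B C : Matrix (Fin 2) (Fin 2) ℂ)
    (hA : A = !![ζ, Complex.I; 0, ζ⁻¹])
    (hB : B = !![ζ ^ 2, -(Complex.I * ((Real.sqrt 2 : ℝ) : ℂ)); 0, (ζ ^ 2)⁻¹])
    (hC : C = !![0, Complex.I; Complex.I, 0])
    (hdA : A.det = 1) (hdB : B.det = 1) (hdC : C.det = 1) :
    orderOf (toPSL ⟨A, hdA⟩) = 6 ∧
    orderOf (toPSL ⟨B, hdB⟩) = 3 ∧
    orderOf (toPSL ⟨C, hdC⟩) = 2 := by
  have hI2 : Complex.I ^ 2 = -1 := Complex.I_sq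
  have hI3 : Complex.I ^ 3 = -Complex.I := by linear_combination Complex.I * hI2
  have hI4 : Complex.I ^ 4 = 1 := by linear_combination (Complex.I^2 - 1) * hI2
  have hs2 : ((Real.sqrt 3 : ℝ) : ℂ) ^ 2 = 3 := by
    rw [← Complex.ofReal_pow, Real.sq_sqrt (by norm_num : (3:ℝ) ≥ 0)]; norm_num
  have hs3 : ((Real.sqrt 3 : ℝ) : ℂ) ^ 3 = 3 * ((Real.sqrt 3 : ℝ) : ℂ) := by
    linear_combination ((Real.sqrt 3 : ℝ) : ℂ) * hs2
  have hs4 : ((Real.sqrt 3 : ℝ) : ℂ) ^ 4 = 9 := by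
    linear_combination (((Real.sqrt 3 : ℝ) : ℂ)^2 + 3) * hs2
  have hsne : ((Real.sqrt 3 : ℝ) : ℂ) ≠ 0 := by
    simp only [ne_eq, Complex.ofReal_eq_zero]
    positivity
  have htne : ((Real.sqrt 2 : ℝ) : ℂ) ≠ 0 := by
    simp only [ne_eq, Complex.ofReal_eq_zero]
    positivity
  have hζv : ζ = (((Real.sqrt 3 : ℝ) : ℂ) + Complex.I) / 2 := by
    rw [hζ, show ((Real.pi : ℂ) * Complex.I / 6) = ((Real.pi / 6 : ℝ) : ℂ) * Complex.I by
      push_cast; ring, Complex.exp_mul_I, ← Complex.ofReal_cos, ← Complex.ofReal_sin,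
      Real.cos_pi_div_six, Real.sin_pi_div_six]
    push_cast; ring
  have hζinv : ζ⁻¹ = (((Real.sqrt 3 : ℝ) : ℂ) - Complex.I) / 2 :=
    inv_eq_of_mul_eq_one_right (by rw [hζv]; linear_combination hs2/4 - hI2/4)
  have hζ2 : ζ ^ 2 = (1 + ((Real.sqrt 3 : ℝ) : ℂ) * Complex.I) / 2 := by
    rw [hζv]; linear_combination hs2/4 + hI2/4
  have hζ2inv : (ζ ^ 2)⁻¹ = (1 - ((Real.sqrt 3 : ℝ) : ℂ) * Complex.I) / 2 :=
    inv_eq_of_mul_eq_one_right (by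
      rw [hζ2]; linear_combination hs2/4 - (((Real.sqrt 3 : ℝ) : ℂ)^2/4) * hI2)
  have hA' : A = !![(((Real.sqrt 3 : ℝ) : ℂ) + Complex.I)/2, Complex.I;
      0, (((Real.sqrt 3 : ℝ) : ℂ) - Complex.I)/2] := by rw [hA, hζinv, hζv]
  have hB' : B = !![(1 + ((Real.sqrt 3 : ℝ) : ℂ) * Complex.I)/2,
      -(Complex.I * ((Real.sqrt 2 : ℝ) : ℂ));
      0, (1 - ((Real.sqrt 3 : ℝ) : ℂ) * Complex.I)/2] := by rw [hB, hζ2inv, hζ2]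
  -- powers of A
  have eA2 : A ^ 2 = !![(1 + ((Real.sqrt 3 : ℝ) : ℂ) * Complex.I)/2,
      Complex.I * ((Real.sqrt 3 : ℝ) : ℂ);
      0, (1 - ((Real.sqrt 3 : ℝ) : ℂ) * Complex.I)/2] := by
    rw [pow_two, hA', Matrix.mul_fin_two]
    ext i j
    fin_cases i <;> fin_cases j <;> simp <;> ring_nf <;>
      simp only [hs2, hs3, hs4, hI2, hI3, hI4] <;> ring_nf
  have eA3 : A ^ 3 = !![Complex.I, 2 * Complex.I; 0, -Complex.I] := by
    rw [pow_succ, eA2, hA', Matrix.mul_fin_two]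
    ext i j
    fin_cases i <;> fin_cases j <;> simp <;> ring_nf <;>
      simp only [hs2, hs3, hs4, hI2, hI3, hI4] <;> ring_nf
  have eA4 : A ^ 4 = !![(((Real.sqrt 3 : ℝ) : ℂ) * Complex.I - 1)/2,
      ((Real.sqrt 3 : ℝ) : ℂ) * Complex.I;
      0, (-(((Real.sqrt 3 : ℝ) : ℂ) * Complex.I) - 1)/2] := by
    rw [pow_succ, eA3, hA', Matrix.mul_fin_two]
    ext i j
    fin_cases i <;> fin_cases j <;> simp <;> ring_nf <;>
      simp only [hs2, hs3, hs4, hI2, hI3, hI4] <;> ring_nf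
  have eA5 : A ^ 5 = !![(Complex.I - ((Real.sqrt 3 : ℝ) : ℂ))/2, Complex.I;
      0, (-Complex.I - ((Real.sqrt 3 : ℝ) : ℂ))/2] := by
    rw [pow_succ, eA4, hA', Matrix.mul_fin_two]
    ext i j
    fin_cases i <;> fin_cases j <;> simp <;> ring_nf <;>
      simp only [hs2, hs3, hs4, hI2, hI3, hI4] <;> ring_nf
  have eA6 : A ^ 6 = -1 := by
    rw [show (6:ℕ) = 3 + 3 from rfl, pow_add, eA3, Matrix.mul_fin_two]
    ext i j
    fin_cases i <;> fin_cases j <;> simp [Matrix.one_apply] <;> ring_nf <;>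
      simp only [hs2, hs3, hs4, hI2, hI3, hI4] <;> ring_nf
  -- powers of B
  have eB2 : B ^ 2 = !![(-1 + ((Real.sqrt 3 : ℝ) : ℂ) * Complex.I)/2,
      -(Complex.I * ((Real.sqrt 2 : ℝ) : ℂ));
      0, (-1 - ((Real.sqrt 3 : ℝ) : ℂ) * Complex.I)/2] := by
    rw [pow_two, hB', Matrix.mul_fin_two]
    ext i j
    fin_cases i <;> fin_cases j <;> simp <;> ring_nf <;>
      simp only [hs2, hs3, hs4, hI2, hI3, hI4] <;> ring_nf
  have eB3 : B ^ 3 = -1 := by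
    rw [pow_succ, eB2, hB', Matrix.mul_fin_two]
    ext i j
    fin_cases i <;> fin_cases j <;> simp [Matrix.one_apply] <;> ring_nf <;>
      simp only [hs2, hs3, hs4, hI2, hI3, hI4] <;> ring_nf
  -- powers of C
  have eC2 : C ^ 2 = -1 := by
    rw [pow_two, hC, Matrix.mul_fin_two]
    ext i j
    fin_cases i <;> fin_cases j <;> simp [Matrix.one_apply] <;> ring_nf <;>
      simp only [hs2, hs3, hs4, hI2, hI3, hI4] <;> ring_nf
  refine ⟨psl_orderOf_eq _ (by norm_num) ?_ ?_,
          psl_orderOf_eq _ (by norm_num) ?_ ?_,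
          psl_orderOf_eq _ (by norm_num) ?_ ?_⟩
  · right; exact eA6
  · intro m hm hm0
    have hcoe : ((⟨A, hdA⟩ : SL2C) : Matrix (Fin 2) (Fin 2) ℂ) = A := rfl
    interval_cases m
    · refine ⟨?_, ?_⟩ <;> intro h <;> rw [hcoe, pow_one, hA'] at h <;>
        have h01 := congrFun (congrFun h 0) 1 <;> simp [hsne] at h01
    · refine ⟨?_, ?_⟩ <;> intro h <;> rw [hcoe, eA2] at h <;>
        have h01 := congrFun (congrFun h 0) 1 <;> simp [hsne] at h01
    · refine ⟨?_, ?_⟩ <;> intro h <;> rw [hcoe, eA3] at h <;>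
        have h01 := congrFun (congrFun h 0) 1 <;> simp [hsne] at h01
    · refine ⟨?_, ?_⟩ <;> intro h <;> rw [hcoe, eA4] at h <;>
        have h01 := congrFun (congrFun h 0) 1 <;> simp [hsne] at h01
    · refine ⟨?_, ?_⟩ <;> intro h <;> rw [hcoe, eA5] at h <;>
        have h01 := congrFun (congrFun h 0) 1 <;> simp [hsne] at h01
  · right; exact eB3
  · intro m hm hm0
    have hcoe : ((⟨B, hdB⟩ : SL2C) : Matrix (Fin 2) (Fin 2) ℂ) = B := rfl
    interval_cases m
    · refine ⟨?_, ?_⟩ <;> intro h <;> rw [hcoe, pow_one, hB'] at h <;>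
        have h01 := congrFun (congrFun h 0) 1 <;> simp [htne] at h01
    · refine ⟨?_, ?_⟩ <;> intro h <;> rw [hcoe, eB2] at h <;>
        have h01 := congrFun (congrFun h 0) 1 <;> simp [htne] at h01
  · right; exact eC2
  · intro m hm hm0
    have hcoe : ((⟨C, hdC⟩ : SL2C) : Matrix (Fin 2) (Fin 2) ℂ) = C := rfl
    interval_cases m
    refine ⟨?_, ?_⟩ <;> intro h <;> rw [hcoe, pow_one, hC] at h <;>
      have h01 := congrFun (congrFun h 0) 1 <;> simp at h01
end

section
/- Let ζ = e^{iπ/6} ∈ ℂ and consider the matrices a = [[ζ, i],[0, ζ⁻¹]], b = [[ζ², -√(-2)],[0, ζ⁻²]], c = [[0, i],[i, 0]] in SL₂(ℂ) (here √(-2) denotes i·√2). Then the images of c·a, c·b⁻¹ and a·b in PSL₂(ℂ) have orders exactly 3, 4 and 2 respectively. -/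
open Matrix Complex

lemma toPSL_eq_one_iff_s5 (M : SL2C) : toPSL M = 1 ↔ M ∈ Subgroup.center SL2C :=
  QuotientGroup.eq_one_iff M

lemma psl_ne_one_of_offdiag (M : SL2C) (h : (M : Matrix (Fin 2) (Fin 2) ℂ) 1 0 ≠ 0) :
    toPSL M ≠ 1 := by
  intro h1
  rw [toPSL_eq_one_iff_s5, Matrix.SpecialLinearGroup.mem_center_iff] at h1
  obtain ⟨r, -, hr⟩ := h1
  apply h
  rw [← hr]
  simp [Matrix.scalar_apply]

lemma psl_ne_one_of_diag (M : SL2C)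
    (h : (M : Matrix (Fin 2) (Fin 2) ℂ) 0 0 ≠ (M : Matrix (Fin 2) (Fin 2) ℂ) 1 1) :
    toPSL M ≠ 1 := by
  intro h1
  rw [toPSL_eq_one_iff_s5, Matrix.SpecialLinearGroup.mem_center_iff] at h1
  obtain ⟨r, -, hr⟩ := h1
  apply h
  rw [← hr]
  simp [Matrix.scalar_apply]

lemma psl_eq_one_of_neg_one (M : SL2C) (h : (M : Matrix (Fin 2) (Fin 2) ℂ) = -1) :
    toPSL M = 1 := by
  rw [toPSL_eq_one_iff_s5, Matrix.SpecialLinearGroup.mem_center_iff]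
  refine ⟨-1, by norm_num, ?_⟩
  rw [h]
  ext i j
  fin_cases i <;> fin_cases j <;> simp [Matrix.scalar_apply]

set_option maxHeartbeats 2000000 in
theorem stmt_5
    (ζ : ℂ) (hζ : ζ = Complex.exp (Real.pi * Complex.I / 6))
    (A B C : Matrix (Fin 2) (Fin 2) ℂ)
    (hA : A = !![ζ, Complex.I; 0, ζ⁻¹])
    (hB : B = !![ζ ^ 2, -(Complex.I * ((Real.sqrt 2 : ℝ) : ℂ)); 0, (ζ ^ 2)⁻¹])
    (hC : C = !![0, Complex.I; Complex.I, 0])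
    (hdA : A.det = 1) (hdB : B.det = 1) (hdC : C.det = 1) :
    orderOf (toPSL ⟨C, hdC⟩ * toPSL ⟨A, hdA⟩) = 3 ∧
    orderOf (toPSL ⟨C, hdC⟩ * (toPSL ⟨B, hdB⟩)⁻¹) = 4 ∧
    orderOf (toPSL ⟨A, hdA⟩ * toPSL ⟨B, hdB⟩) = 2 := by
  have hz0 : ζ ≠ 0 := by rw [hζ]; exact Complex.exp_ne_zero _
  have hz3 : ζ ^ 3 = Complex.I := by
    rw [hζ, ← Complex.exp_nat_mul]
    have h1 : ((3:ℕ) : ℂ) * (Real.pi * Complex.I / 6) = ((Real.pi / 2 : ℝ) : ℂ) * Complex.I := by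
      push_cast; ring
    rw [h1, Complex.exp_mul_I, ← Complex.ofReal_cos, ← Complex.ofReal_sin,
      Real.cos_pi_div_two, Real.sin_pi_div_two]
    simp
  set s : ℂ := ((Real.sqrt 2 : ℝ) : ℂ) with hs
  have hs2 : s ^ 2 = 2 := by
    rw [hs, ← Complex.ofReal_pow, Real.sq_sqrt (by norm_num)]; norm_num
  have hs3 : s ^ 3 = 2 * s := by rw [pow_succ, hs2]
  have hs4 : s ^ 4 = 4 := by rw [show (4:ℕ) = 2*2 from rfl, pow_mul, hs2]; norm_num
  have hs0 : s ≠ 0 := by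
    rw [hs]; simp [Real.sqrt_eq_zero']
  clear_value s
  have hI2 : Complex.I ^ 2 = -1 := Complex.I_sq
  have hI3 : Complex.I ^ 3 = -Complex.I := by rw [pow_succ, hI2]; ring
  have hI4 : Complex.I ^ 4 = 1 := by rw [show (4:ℕ) = 2*2 from rfl, pow_mul, hI2]; ring
  have hz5 : ζ ^ 5 = Complex.I * ζ ^ 2 := by rw [show ζ^5 = ζ^3 * ζ^2 by ring, hz3]
  have hz6 : ζ ^ 6 = -1 := by rw [show ζ^6 = (ζ^3)^2 by ring, hz3, hI2]
  have hz8 : ζ ^ 8 = -ζ^2 := by rw [show ζ^8 = (ζ^3)^2 * ζ^2 by ring, hz3, hI2]; ring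
  have hz11 : ζ ^ 11 = -(Complex.I * ζ^2) := by
    rw [show ζ^11 = (ζ^3)^3 * ζ^2 by ring, hz3, hI3]; ring
  set a : SL2C := ⟨A, hdA⟩ with ha
  set b : SL2C := ⟨B, hdB⟩ with hb
  set c : SL2C := ⟨C, hdC⟩ with hc
  have hmul : ∀ x y : SL2C, toPSL x * toPSL y = toPSL (x * y) := fun _ _ => rfl
  have hinv : ∀ x : SL2C, (toPSL x)⁻¹ = toPSL x⁻¹ := fun _ => rfl
  refine ⟨?_, ?_, ?_⟩
  · -- order of ca is 3
    rw [hmul]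
    set M := c * a with hM
    have hMval : (M : Matrix (Fin 2) (Fin 2) ℂ) = C * A := by
      rw [hM, Matrix.SpecialLinearGroup.coe_mul, hc, ha]
    clear_value M
    have h3 : (toPSL M) ^ 3 = 1 := by
      rw [← QuotientGroup.mk_pow, toPSL_eq_one_iff_s5]
      have : M ^ 3 = 1 := by
        apply Subtype.ext
        rw [Matrix.SpecialLinearGroup.coe_pow, hMval, hA, hC]
        ext i j
        fin_cases i <;> fin_cases j
        all_goals try simp [pow_succ, Matrix.mul_apply, Fin.sum_univ_succ]
        all_goals try field_simp
        all_goals try left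
        all_goals try ring_nf
        all_goals try simp only [hI2, hI3, hI4]
        all_goals try ring_nf
      rw [this]; exact Subgroup.one_mem _
    have hne : toPSL M ≠ 1 := by
      apply psl_ne_one_of_offdiag
      rw [hMval, hA, hC]
      simp [Matrix.mul_apply, Fin.sum_univ_succ, Complex.I_ne_zero, hz0]
    exact orderOf_eq_prime h3 hne
  · -- order of c * b⁻¹ is 4
    rw [hinv, hmul]
    set M := c * b⁻¹ with hM
    have hMval : (M : Matrix (Fin 2) (Fin 2) ℂ) =
        !![0, Complex.I * ζ ^ 2; Complex.I * (ζ^2)⁻¹, -s] := by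
      rw [hM, Matrix.SpecialLinearGroup.coe_mul, Matrix.SpecialLinearGroup.coe_inv, hc, hb]
      show C * Matrix.adjugate B = _
      rw [hB, hC, Matrix.adjugate_fin_two]
      ext i j
      fin_cases i <;> fin_cases j
      all_goals simp [Matrix.mul_apply, Fin.sum_univ_succ]
      all_goals try ring
      all_goals simp only [hI2]
      all_goals ring
    clear_value M
    clear hM ha hb hc a b c hζ hA hB hC hdA hdB hdC A B C hmul hinv
    have h4 : (toPSL M) ^ 4 = 1 := by
      rw [← QuotientGroup.mk_pow]
      apply psl_eq_one_of_neg_one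
      rw [Matrix.SpecialLinearGroup.coe_pow, hMval]
      ext i j
      fin_cases i <;> fin_cases j
      all_goals try simp [pow_succ, Matrix.mul_apply, Fin.sum_univ_succ]
      all_goals try field_simp
      all_goals try left
      all_goals try ring_nf
      all_goals try simp only [hI2, hI3, hI4, hs2, hs3, hs4]
      all_goals try ring_nf
    have h2 : (toPSL M) ^ 2 ≠ 1 := by
      rw [← QuotientGroup.mk_pow]
      apply psl_ne_one_of_offdiag
      rw [Matrix.SpecialLinearGroup.coe_pow, hMval]
      simp [pow_succ, Matrix.mul_apply, Fin.sum_univ_succ, hz0, hs0, Complex.I_ne_zero]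
    have h1 : toPSL M ≠ 1 := by
      apply psl_ne_one_of_offdiag
      rw [hMval]
      simp [hz0, Complex.I_ne_zero]
    have hdvd : orderOf (toPSL M) ∣ 4 := orderOf_dvd_of_pow_eq_one h4
    have hnd2 : ¬ orderOf (toPSL M) ∣ 2 := fun h => h2 (orderOf_dvd_iff_pow_eq_one.mp h)
    have hne1 : orderOf (toPSL M) ≠ 1 := fun h => h1 (orderOf_eq_one_iff.mp h)
    have hle : orderOf (toPSL M) ≤ 4 := Nat.le_of_dvd (by norm_num) hdvd
    interval_cases h : orderOf (toPSL M) <;> first | rfl | (exfalso; revert hdvd hnd2; norm_num)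
  · -- order of a * b is 2
    rw [hmul]
    set M := a * b with hM
    have hMval : (M : Matrix (Fin 2) (Fin 2) ℂ) = A * B := by
      rw [hM, Matrix.SpecialLinearGroup.coe_mul, ha, hb]
    clear_value M
    have h2 : (toPSL M) ^ 2 = 1 := by
      rw [← QuotientGroup.mk_pow]
      apply psl_eq_one_of_neg_one
      rw [Matrix.SpecialLinearGroup.coe_pow, hMval, hA, hB]
      ext i j
      fin_cases i <;> fin_cases j
      all_goals try simp [pow_succ, Matrix.mul_apply, Fin.sum_univ_succ]
      all_goals try field_simp
      all_goals try left
      all_goals try ring_nf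
      all_goals try simp only [hI2, hI3, hI4, hs2, hz5, hz6, hz8, hz11]
      all_goals try ring_nf
      all_goals linear_combination (-(Complex.I * s) * ζ ^ 3) * hz6
    have h1 : toPSL M ≠ 1 := by
      apply psl_ne_one_of_diag
      rw [hMval, hA, hB]
      simp [Matrix.mul_apply, Fin.sum_univ_succ]
      intro h
      have h' : Complex.I * Complex.I = 1 := by
        rw [← hz3]
        field_simp at h
        linear_combination h
      rw [Complex.I_mul_I] at h'
      norm_num at h'
    exact orderOf_eq_prime h2 h1
end

section
/- Let ζ = e^{iπ/6} ∈ ℂ and consider the matrices a = [[ζ, i],[0, ζ⁻¹]], b = [[ζ², -((1+√5)/2)·i],[0, ζ⁻²]], c = [[0, i],[i, 0]] in SL₂(ℂ). Then the images of c·a, c·b⁻¹ and a·b in PSL₂(ℂ) have orders exactly 3, 5 and 2 respectively. -/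
open Matrix Complex

private lemma entry_ext' {a b c d e f g h : ℂ}
    (h1 : a = e) (h2 : b = f) (h3 : c = g) (h4 : d = h) :
    (!![a,b;c,d] : Matrix (Fin 2) (Fin 2) ℂ) = !![e,f;g,h] := by
  rw [h1, h2, h3, h4]

private lemma neg_one_fin_two : (-1 : Matrix (Fin 2) (Fin 2) ℂ) = !![-1,0;0,-1] := by
  rw [Matrix.one_fin_two]; ext i j; fin_cases i <;> fin_cases j <;> simp

private lemma cube_lemma (u v : ℂ) (huv : u * v = -1) :
    (!![0, u; v, -1] : Matrix (Fin 2) (Fin 2) ℂ) ^ 3 = 1 := by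
  rw [pow_succ, pow_succ, pow_one, Matrix.mul_fin_two, Matrix.mul_fin_two, Matrix.one_fin_two]
  exact entry_ext' (by linear_combination (-1:ℂ) * huv) (by linear_combination u * huv)
    (by linear_combination v * huv) (by linear_combination (-2:ℂ) * huv)

private lemma five_lemma (u v φ : ℂ) (huv : u * v = -1) (hφ : φ ^ 2 = φ + 1) :
    (!![0, u; v, -φ] : Matrix (Fin 2) (Fin 2) ℂ) ^ 5 = 1 := by
  have h2 : (!![0, u; v, -φ] : Matrix (Fin 2) (Fin 2) ℂ) * !![0, u; v, -φ]
      = !![-1, -(u*φ); -(v*φ), φ] := by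
    rw [Matrix.mul_fin_two]
    exact entry_ext' (by linear_combination huv) (by ring) (by ring)
      (by linear_combination huv + hφ)
  have h4 : (!![(-1:ℂ), -(u*φ); -(v*φ), φ] : Matrix (Fin 2) (Fin 2) ℂ) * !![-1, -(u*φ); -(v*φ), φ]
      = !![-φ, -u; -v, 0] := by
    rw [Matrix.mul_fin_two]
    exact entry_ext' (by linear_combination (φ^2) * huv - hφ) (by linear_combination (-u) * hφ)
      (by linear_combination (-v) * hφ) (by linear_combination (φ^2) * huv)
  have h5 : (!![(-φ:ℂ), -u; -v, 0] : Matrix (Fin 2) (Fin 2) ℂ) * !![0, u; v, -φ] = 1 := by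
    rw [Matrix.mul_fin_two, Matrix.one_fin_two]
    exact entry_ext' (by linear_combination (-1:ℂ) * huv) (by ring) (by ring)
      (by linear_combination (-1:ℂ) * huv)
  calc (!![0, u; v, -φ] : Matrix (Fin 2) (Fin 2) ℂ) ^ 5
      = (!![0, u; v, -φ] * !![0, u; v, -φ]) * (!![0, u; v, -φ] * !![0, u; v, -φ])
          * !![0, u; v, -φ] := by
        rw [show (5:ℕ) = 2+2+1 from rfl, pow_add, pow_add, pow_one, sq]
    _ = 1 := by rw [h2, h4, h5]

private lemma square_lemma (w x : ℂ) (hw : w ^ 2 = -1) :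
    (!![w, x; 0, -w] : Matrix (Fin 2) (Fin 2) ℂ) ^ 2 = -1 := by
  rw [pow_two, Matrix.mul_fin_two, neg_one_fin_two]
  exact entry_ext' (by linear_combination hw) (by ring) (by ring) (by linear_combination hw)

lemma psl_pow_eq_one (M : SL2C) (n : ℕ)
    (h : (M : Matrix (Fin 2) (Fin 2) ℂ) ^ n = 1 ∨ (M : Matrix (Fin 2) (Fin 2) ℂ) ^ n = -1) :
    (toPSL M) ^ n = 1 := by
  rw [← QuotientGroup.mk_pow, QuotientGroup.eq_one_iff, Subgroup.mem_center_iff]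
  intro g
  apply Subtype.ext
  simp only [Matrix.SpecialLinearGroup.coe_mul, Matrix.SpecialLinearGroup.coe_pow]
  rcases h with h | h <;> rw [h] <;> simp

lemma psl_ne_one (M g : SL2C) (i j : Fin 2)
    (h : ((g : Matrix (Fin 2) (Fin 2) ℂ) * M) i j ≠ ((M : Matrix (Fin 2) (Fin 2) ℂ) * g) i j) :
    toPSL M ≠ 1 := by
  intro he
  rw [QuotientGroup.eq_one_iff, Subgroup.mem_center_iff] at he
  exact h (by rw [← Matrix.SpecialLinearGroup.coe_mul, ← Matrix.SpecialLinearGroup.coe_mul, he g])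

theorem stmt_9
    (ζ : ℂ) (hζ : ζ = Complex.exp (Real.pi * Complex.I / 6))
    (A B C : Matrix (Fin 2) (Fin 2) ℂ)
    (hA : A = !![ζ, Complex.I; 0, ζ⁻¹])
    (hB : B = !![ζ ^ 2, -(((1 + Real.sqrt 5) / 2 : ℝ) : ℂ) * Complex.I; 0, (ζ ^ 2)⁻¹])
    (hC : C = !![0, Complex.I; Complex.I, 0])
    (hdA : A.det = 1) (hdB : B.det = 1) (hdC : C.det = 1) :
    orderOf (toPSL ⟨C, hdC⟩ * toPSL ⟨A, hdA⟩) = 3 ∧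
    orderOf (toPSL ⟨C, hdC⟩ * (toPSL ⟨B, hdB⟩)⁻¹) = 5 ∧
    orderOf (toPSL ⟨A, hdA⟩ * toPSL ⟨B, hdB⟩) = 2 := by
  haveI : Fact (Nat.Prime 2) := ⟨by norm_num⟩
  haveI : Fact (Nat.Prime 3) := ⟨by norm_num⟩
  haveI : Fact (Nat.Prime 5) := ⟨by norm_num⟩
  have hζ0 : ζ ≠ 0 := by rw [hζ]; exact Complex.exp_ne_zero _
  have hζ3 : ζ ^ 3 = Complex.I := by
    rw [hζ, ← Complex.exp_nat_mul]
    have h3 : (3:ℕ) * (↑Real.pi * Complex.I / 6) = ↑(Real.pi/2) * Complex.I := by push_cast; ring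
    rw [h3, Complex.exp_mul_I, ← Complex.ofReal_cos, ← Complex.ofReal_sin,
      Real.cos_pi_div_two, Real.sin_pi_div_two]
    simp
  set φ : ℂ := (((1 + Real.sqrt 5) / 2 : ℝ) : ℂ) with hφdef
  have hs : (((Real.sqrt 5 : ℝ) : ℂ))^2 = 5 := by
    norm_cast
    rw [Real.sq_sqrt]; norm_num
  have hφ2 : φ ^ 2 = φ + 1 := by
    rw [hφdef]; push_cast; linear_combination hs/4
  -- products
  have hCA : C * A = !![0, Complex.I * ζ⁻¹; Complex.I * ζ, -1] := by
    rw [hA, hC, Matrix.mul_fin_two]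
    exact entry_ext' (by ring) (by ring) (by ring) (by linear_combination Complex.I_sq)
  have hCBinv : C * B.adjugate = !![0, Complex.I * ζ^2; Complex.I * (ζ^2)⁻¹, -φ] := by
    rw [hB, hC, Matrix.adjugate_fin_two_of, Matrix.mul_fin_two]
    exact entry_ext' (by ring) (by ring) (by ring) (by linear_combination φ * Complex.I_sq)
  have hAB : A * B = !![Complex.I, ζ * (-φ * Complex.I) + Complex.I * (ζ^2)⁻¹; 0, -Complex.I] := by
    rw [hA, hB, Matrix.mul_fin_two]
    refine entry_ext' (by linear_combination hζ3) (by ring) (by ring) ?_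
    have h2 : ζ^2 ≠ 0 := pow_ne_zero _ hζ0
    field_simp
    linear_combination Complex.I * hζ3 + Complex.I_sq
  refine ⟨?_, ?_, ?_⟩
  · show orderOf (toPSL (@HMul.hMul SL2C SL2C SL2C _ ⟨C, hdC⟩ ⟨A, hdA⟩)) = 3
    refine orderOf_eq_prime (psl_pow_eq_one _ 3 (Or.inl ?_)) (psl_ne_one _ ⟨A, hdA⟩ 0 0 ?_)
    · show (C * A) ^ 3 = 1
      rw [hCA]
      refine cube_lemma _ _ ?_
      field_simp
      linear_combination Complex.I_sq
    · show (A * (C * A)) 0 0 ≠ ((C * A) * A) 0 0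
      rw [hCA, hA, Matrix.mul_fin_two, Matrix.mul_fin_two]
      simp only [Matrix.cons_val', Matrix.cons_val_zero, Matrix.cons_val_one, Matrix.head_cons,
        Matrix.head_fin_const, Matrix.empty_val', Matrix.cons_val_fin_one, Matrix.of_apply]
      intro h
      apply hζ0
      linear_combination -h + ζ * Complex.I_sq
  · show orderOf (toPSL (@HMul.hMul SL2C SL2C SL2C _ ⟨C, hdC⟩ (@Inv.inv SL2C _ ⟨B, hdB⟩))) = 5
    refine orderOf_eq_prime (psl_pow_eq_one _ 5 (Or.inl ?_)) (psl_ne_one _ ⟨A, hdA⟩ 0 0 ?_)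
    · show (C * B.adjugate) ^ 5 = 1
      rw [hCBinv]
      refine five_lemma _ _ _ ?_ hφ2
      have h2 : ζ^2 ≠ 0 := pow_ne_zero _ hζ0
      field_simp
      linear_combination Complex.I_sq
    · show (A * (C * B.adjugate)) 0 0 ≠ ((C * B.adjugate) * A) 0 0
      rw [hCBinv, hA, Matrix.mul_fin_two, Matrix.mul_fin_two]
      simp only [Matrix.cons_val', Matrix.cons_val_zero, Matrix.cons_val_one, Matrix.head_cons,
        Matrix.head_fin_const, Matrix.empty_val', Matrix.cons_val_fin_one, Matrix.of_apply]
      intro h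
      have h2 : ζ^2 ≠ 0 := pow_ne_zero _ hζ0
      field_simp at h
      simp [Complex.I_sq] at h
  · show orderOf (toPSL (@HMul.hMul SL2C SL2C SL2C _ ⟨A, hdA⟩ ⟨B, hdB⟩)) = 2
    refine orderOf_eq_prime (psl_pow_eq_one _ 2 (Or.inr ?_)) (psl_ne_one _ ⟨C, hdC⟩ 1 0 ?_)
    · show (A * B) ^ 2 = -1
      rw [hAB]
      exact square_lemma _ _ Complex.I_sq
    · show (C * (A * B)) 1 0 ≠ ((A * B) * C) 1 0
      rw [hAB, hC, Matrix.mul_fin_two, Matrix.mul_fin_two]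
      simp only [Matrix.cons_val', Matrix.cons_val_zero, Matrix.cons_val_one, Matrix.head_cons,
        Matrix.head_fin_const, Matrix.empty_val', Matrix.cons_val_fin_one, Matrix.of_apply]
      intro h
      have : (Complex.I : ℂ) * Complex.I = - (Complex.I * Complex.I) := by linear_combination h
      simp [Complex.I_mul_I] at this
      norm_num at this
end

section
/- Let t = e^{iπ/5} ∈ ℂ (a primitive 10th root of unity) and let P(x) = x⁴ + ((-6t³+6t²+8)/5)·x³ + ((-t³+t²-3)/5)·x² + ((-4t³+4t²+2)/25)·x + (3t³-3t²+2)/25. Then every coefficient of P is a real number, and P has exactly two roots α ∈ ℂ with Im(α) ≠ 0. -/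
open Polynomial

namespace Stmt10Aux

noncomputable def sg : ℝ := (1 - Real.sqrt 5) / 2
noncomputable def qq : ℝ := (sg + 1) / 5
noncomputable def uu : ℝ := (3 * sg - 4 + 5 * Real.sqrt 2) / 5
noncomputable def vv : ℝ := (4 - 3 * sg + 5 * Real.sqrt 2) / 5
noncomputable def ww : ℝ := Real.sqrt (qq - uu ^ 2 / 4)

lemma h5 : Real.sqrt 5 ^ 2 = 5 := Real.sq_sqrt (by norm_num)
lemma h2 : Real.sqrt 2 ^ 2 = 2 := Real.sq_sqrt (by norm_num)

lemma hsg : sg ^ 2 = sg + 1 := by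
  have := h5
  simp only [sg]
  nlinarith [this]

lemma h5a : Real.sqrt 5 > 2.23 := by
  nlinarith [h5, Real.sqrt_nonneg 5]

lemma h5b : Real.sqrt 5 < 2.24 := by
  nlinarith [h5, Real.sqrt_nonneg 5]

lemma h2a : Real.sqrt 2 > 1.41 := by
  nlinarith [h2, Real.sqrt_nonneg 2]

lemma hdisc_pos : qq - uu ^ 2 / 4 > 0 := by
  simp only [qq, uu, sg]
  nlinarith [h5, h2, h5a, h5b, h2a, mul_pos (show (0:ℝ) < Real.sqrt 5 by nlinarith [h5a])
    (show (0:ℝ) < Real.sqrt 2 by nlinarith [h2a]),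
    mul_le_mul_of_nonneg_left h5b.le (show (0:ℝ) ≤ Real.sqrt 2 by nlinarith [h2a])]

lemma hww : ww ^ 2 = qq - uu ^ 2 / 4 := Real.sq_sqrt hdisc_pos.le

lemma hww_pos : ww > 0 := Real.sqrt_pos.mpr hdisc_pos

lemma hdisc2 : vv ^ 2 / 4 - qq ≥ 0 := by
  simp only [qq, vv, sg]
  nlinarith [h5, h2, h5a, h2a, mul_pos (show (0:ℝ) < Real.sqrt 5 by nlinarith [h5a])
    (show (0:ℝ) < Real.sqrt 2 by nlinarith [h2a])]

lemma hvu : vv - uu = (8 - 6 * sg) / 5 := by simp only [vv, uu]; ring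

lemma huv : uu * vv = (5 + 3 * sg) / 5 := by
  simp only [uu, vv]
  linear_combination h2 - (9 / 25 : ℝ) * hsg

lemma hq : qq = (sg + 1) / 5 := rfl

lemma hq2 : qq ^ 2 = (3 * sg + 2) / 25 := by
  simp only [qq]
  linear_combination (1 / 25 : ℝ) * hsg

lemma hqvu : qq * (vv - uu) = (2 - 4 * sg) / 25 := by
  simp only [qq, vv, uu]
  linear_combination (-6 / 25 : ℝ) * hsg

end Stmt10Aux

open Stmt10Aux in
theorem stmt_10
    (t : ℂ) (ht : t = Complex.exp (Real.pi * Complex.I / 5))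
    (P : Polynomial ℂ)
    (hP : P = X ^ 4 + C ((-6 * t ^ 3 + 6 * t ^ 2 + 8) / 5) * X ^ 3
        + C ((-t ^ 3 + t ^ 2 - 3) / 5) * X ^ 2
        + C ((-4 * t ^ 3 + 4 * t ^ 2 + 2) / 25) * X
        + C ((3 * t ^ 3 - 3 * t ^ 2 + 2) / 25)) :
    (∀ n : ℕ, ∃ r : ℝ, P.coeff n = (r : ℂ)) ∧
    {α : ℂ | P.eval α = 0 ∧ α.im ≠ 0}.ncard = 2 := by
  -- t^3 - t^2 equals the real number sg
  have hst : t ^ 3 - t ^ 2 = (sg : ℂ) := by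
    have key : ∀ n : ℕ, t ^ n = Complex.exp ((n * Real.pi / 5 : ℝ) * Complex.I) := by
      intro n
      rw [ht, ← Complex.exp_nat_mul]
      congr 1
      push_cast
      ring
    have h2 := key 2
    have h3 := key 3
    rw [Complex.exp_mul_I] at h2 h3
    rw [← Complex.ofReal_cos, ← Complex.ofReal_sin] at h2 h3
    have hs : Real.sin (3 * Real.pi / 5) = Real.sin (2 * Real.pi / 5) := by
      rw [show (3 : ℝ) * Real.pi / 5 = Real.pi - 2 * Real.pi / 5 by ring, Real.sin_pi_sub]
    have hc : Real.cos (3 * Real.pi / 5) = - Real.cos (2 * Real.pi / 5) := by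
      rw [show (3 : ℝ) * Real.pi / 5 = Real.pi - 2 * Real.pi / 5 by ring, Real.cos_pi_sub]
    have hcos : Real.cos (2 * Real.pi / 5) = (Real.sqrt 5 - 1) / 4 := by
      have h1 := Real.cos_pi_div_five
      have hd : Real.cos (2 * (Real.pi / 5)) = 2 * Real.cos (Real.pi / 5) ^ 2 - 1 :=
        Real.cos_two_mul _
      rw [show 2 * Real.pi / 5 = 2 * (Real.pi / 5) by ring, hd, h1]
      nlinarith [h5]
    push_cast [h2, h3, hs, hc, hcos]
    simp only [sg]
    push_cast
    ring
  -- complex-valued versions of the real facts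
  have Hsg : ((sg : ℂ)) ^ 2 = (sg : ℂ) + 1 := by exact_mod_cast hsg
  have Hvu : ((vv : ℂ)) - (uu : ℂ) = (8 - 6 * (sg : ℂ)) / 5 := by exact_mod_cast hvu
  have Huv : ((uu : ℂ)) * (vv : ℂ) = (5 + 3 * (sg : ℂ)) / 5 := by exact_mod_cast huv
  have Hq : ((qq : ℂ)) = ((sg : ℂ) + 1) / 5 := by exact_mod_cast hq
  have Hq2 : ((qq : ℂ)) ^ 2 = (3 * (sg : ℂ) + 2) / 25 := by exact_mod_cast hq2
  have Hqvu : ((qq : ℂ)) * ((vv : ℂ) - (uu : ℂ)) = (2 - 4 * (sg : ℂ)) / 25 := by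
    exact_mod_cast hqvu
  have Hww : ((ww : ℂ)) ^ 2 = (qq : ℂ) - (uu : ℂ) ^ 2 / 4 := by exact_mod_cast hww
  -- the key factorization of P at any point
  have key : ∀ α : ℂ, P.eval α = (α ^ 2 - (uu : ℂ) * α + (qq : ℂ)) *
      (α ^ 2 + (vv : ℂ) * α + (qq : ℂ)) := by
    intro α
    rw [hP]
    simp only [eval_add, eval_mul, eval_pow, eval_X, eval_C]
    have e3 : (-6 * t ^ 3 + 6 * t ^ 2 + 8) / 5 = (8 - 6 * (sg : ℂ)) / 5 := by
      linear_combination (-6 / 5 : ℂ) * hst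
    have e2 : (-t ^ 3 + t ^ 2 - 3) / 5 = (-(sg : ℂ) - 3) / 5 := by
      linear_combination (-1 / 5 : ℂ) * hst
    have e1 : (-4 * t ^ 3 + 4 * t ^ 2 + 2) / 25 = (2 - 4 * (sg : ℂ)) / 25 := by
      linear_combination (-4 / 25 : ℂ) * hst
    have e0 : (3 * t ^ 3 - 3 * t ^ 2 + 2) / 25 = (3 * (sg : ℂ) + 2) / 25 := by
      linear_combination (3 / 25 : ℂ) * hst
    rw [e3, e2, e1, e0]
    linear_combination (-α ^ 3) * Hvu + α ^ 2 * Huv - 2 * α ^ 2 * Hq - α * Hqvu - Hq2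
  -- the two non-real roots
  set z1 : ℂ := (uu : ℂ) / 2 + (ww : ℂ) * Complex.I with hz1
  set z2 : ℂ := (uu : ℂ) / 2 - (ww : ℂ) * Complex.I with hz2
  have hI : Complex.I ^ 2 = -1 := Complex.I_sq
  have hz1root : z1 ^ 2 - (uu : ℂ) * z1 + (qq : ℂ) = 0 := by
    rw [hz1]
    linear_combination ((ww : ℂ)) ^ 2 * hI - Hww
  have hz2root : z2 ^ 2 - (uu : ℂ) * z2 + (qq : ℂ) = 0 := by
    rw [hz2]
    linear_combination ((ww : ℂ)) ^ 2 * hI - Hww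
  have hz1im : z1.im = ww := by simp [hz1]
  have hz2im : z2.im = -ww := by simp [hz2]
  have hwne : ww ≠ 0 := ne_of_gt hww_pos
  constructor
  · -- all coefficients are real
    intro n
    have e3 : (-6 * t ^ 3 + 6 * t ^ 2 + 8) / 5 = (((8 - 6 * sg) / 5 : ℝ) : ℂ) := by
      push_cast; linear_combination (-6 / 5 : ℂ) * hst
    have e2 : (-t ^ 3 + t ^ 2 - 3) / 5 = (((-sg - 3) / 5 : ℝ) : ℂ) := by
      push_cast; linear_combination (-1 / 5 : ℂ) * hst
    have e1 : (-4 * t ^ 3 + 4 * t ^ 2 + 2) / 25 = (((2 - 4 * sg) / 25 : ℝ) : ℂ) := by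
      push_cast; linear_combination (-4 / 25 : ℂ) * hst
    have e0 : (3 * t ^ 3 - 3 * t ^ 2 + 2) / 25 = (((3 * sg + 2) / 25 : ℝ) : ℂ) := by
      push_cast; linear_combination (3 / 25 : ℂ) * hst
    rw [hP, e3, e2, e1, e0]
    match n with
    | 0 => exact ⟨(3 * sg + 2) / 25, by simp⟩
    | 1 => exact ⟨(2 - 4 * sg) / 25, by simp⟩
    | 2 => exact ⟨(-sg - 3) / 5, by simp⟩
    | 3 => exact ⟨(8 - 6 * sg) / 5, by simp⟩
    | 4 => exact ⟨1, by simp⟩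
    | (n + 5) =>
      refine ⟨0, ?_⟩
      simp only [coeff_add, coeff_C_mul, coeff_X_pow, coeff_C, coeff_X]
      have h4 : ¬ (n + 5 = 4) := by omega
      have h3 : ¬ (n + 5 = 3) := by omega
      have h2' : ¬ (n + 5 = 2) := by omega
      have h1 : ¬ (n + 5 = 1) := by omega
      have h0 : ¬ (n + 5 = 0) := by omega
      simp [h4, h3, h2', h1, h0]
  · -- the root set is {z1, z2}
    have hset : {α : ℂ | P.eval α = 0 ∧ α.im ≠ 0} = {z1, z2} := by
      ext α
      simp only [Set.mem_setOf_eq, Set.mem_insert_iff, Set.mem_singleton_iff]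
      constructor
      · rintro ⟨hroot, him⟩
        rw [key α] at hroot
        rcases mul_eq_zero.mp hroot with h | h
        · -- first quadratic: (α - u/2)^2 = -(w^2)
          have hfac : (α - (uu : ℂ) / 2 - (ww : ℂ) * Complex.I) *
              (α - (uu : ℂ) / 2 + (ww : ℂ) * Complex.I) = 0 := by
            linear_combination h - ((ww : ℂ)) ^ 2 * hI + Hww
          rcases mul_eq_zero.mp hfac with h' | h'
          · left; rw [hz1]; linear_combination h'
          · right; rw [hz2]; linear_combination h'
        · -- second quadratic has only real roots: contradiction
          exfalso
          set d : ℝ := Real.sqrt (vv ^ 2 / 4 - qq) with hd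
          have hd2 : (d : ℝ) ^ 2 = vv ^ 2 / 4 - qq := Real.sq_sqrt hdisc2
          have hd2C : ((d : ℂ)) ^ 2 = (vv : ℂ) ^ 2 / 4 - (qq : ℂ) := by exact_mod_cast hd2
          have hfac : (α + (vv : ℂ) / 2 - (d : ℂ)) * (α + (vv : ℂ) / 2 + (d : ℂ)) = 0 := by
            linear_combination h - hd2C
          rcases mul_eq_zero.mp hfac with h' | h'
          · have : α = (d : ℂ) - (vv : ℂ) / 2 := by linear_combination h'
            apply him
            rw [this]
            simp [Complex.sub_im, Complex.ofReal_im, Complex.div_im]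
          · have : α = -(d : ℂ) - (vv : ℂ) / 2 := by linear_combination h'
            apply him
            rw [this]
            simp [Complex.sub_im, Complex.ofReal_im]
      · rintro (rfl | rfl)
        · refine ⟨?_, by rw [hz1im]; exact hwne⟩
          rw [key z1]
          rw [hz1root]
          ring
        · refine ⟨?_, by rw [hz2im]; simpa using hwne⟩
          rw [key z2]
          rw [hz2root]
          ring
    rw [hset]
    refine Set.ncard_pair ?_
    intro hcon
    have : z1.im = z2.im := by rw [hcon]
    rw [hz1im, hz2im] at this
    exact hwne (by linarith)
end

section
/- Let t = e^{iπ/5} ∈ ℂ, let α ∈ ℂ be a root of P(x) = x⁴ + ((-6t³+6t²+8)/5)·x³ + ((-t³+t²-3)/5)·x² + ((-4t³+4t²+2)/25)·x + (3t³-3t²+2)/25 with Im(α) ≠ 0, and set β = (-20t³+20t²+35)·α³ + (-50t³+50t²+80)·α² + (9t³-9t²-17)·α - 4t³+4t²+6. Define the matrices a = [[(2t³+t²+t+2)/5, 1],[(-t³+t²-2)/5, (-2t³-t²-t+3)/5]], b = [[(-3t³+t²-4t+2)/5, β],[α, (3t³-t²+4t-2)/5]], c = [[t⁻¹, 0],[0,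 t]]. Then det(a) = det(b) = det(c) = 1, and the images of a, b, c in PSL₂(ℂ) satisfy the relations a³ = b² = c⁵ = (b·c⁻¹)³ = (a·c⁻¹)² = (a·b)⁴ = 1. -/
open Matrix

private lemma CH2 (p q r s : ℂ) (h : p * s - q * r = 1) :
    !![p, q; r, s] * !![p, q; r, s] = (p + s) • !![p, q; r, s] - 1 := by
  ext i j
  fin_cases i <;> fin_cases j
  all_goals simp [Matrix.mul_apply, Fin.sum_univ_two, Matrix.one_apply]
  all_goals try ring
  all_goals linear_combination -h

private lemma sq_neg_one (p q r s : ℂ) (h : p * s - q * r = 1) (htr : p + s = 0) :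
    !![p, q; r, s] ^ 2 = -1 := by
  have h2 := CH2 p q r s h
  rw [htr, zero_smul, zero_sub] at h2
  rw [pow_two, h2]

private lemma cube_neg_one (p q r s : ℂ) (h : p * s - q * r = 1) (htr : p + s = 1) :
    !![p, q; r, s] ^ 3 = -1 := by
  have h2 := CH2 p q r s h
  rw [htr, one_smul] at h2
  have h3 : !![p, q; r, s] ^ 3 = (!![p, q; r, s] * !![p, q; r, s]) * !![p, q; r, s] := by
    rw [pow_succ, pow_two]
  rw [h3, h2, sub_mul, one_mul, h2]
  abel

private lemma pow4_neg_one (p q r s : ℂ) (h : p * s - q * r = 1)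
    (htr : (p + s) ^ 2 = 2) : !![p, q; r, s] ^ 4 = -1 := by
  have hXX : !![p, q; r, s] * !![p, q; r, s]
      = !![p * p + q * r, p * q + q * s; r * p + s * r, r * q + s * s] := by
    rw [Matrix.mul_fin_two]
  have hd : (p * p + q * r) * (r * q + s * s) - (p * q + q * s) * (r * p + s * r) = 1 := by
    linear_combination (p * s - q * r + 1) * h
  have ht : (p * p + q * r) + (r * q + s * s) = 0 := by
    linear_combination htr - 2 * h
  have h4 : !![p, q; r, s] ^ 4 = (!![p, q; r, s] * !![p, q; r, s]) ^ 2 := by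
    rw [← pow_two, ← pow_mul]
  rw [h4, hXX]
  exact sq_neg_one _ _ _ _ hd ht

set_option maxHeartbeats 2000000 in
theorem stmt_11
    (t : ℂ) (ht : t = Complex.exp (Real.pi * Complex.I / 5))
    (α : ℂ)
    (hα : α ^ 4 + ((-6 * t ^ 3 + 6 * t ^ 2 + 8) / 5) * α ^ 3
        + ((-t ^ 3 + t ^ 2 - 3) / 5) * α ^ 2
        + ((-4 * t ^ 3 + 4 * t ^ 2 + 2) / 25) * α
        + (3 * t ^ 3 - 3 * t ^ 2 + 2) / 25 = 0)
    (hαim : α.im ≠ 0)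
    (β : ℂ)
    (hβ : β = (-20 * t ^ 3 + 20 * t ^ 2 + 35) * α ^ 3
        + (-50 * t ^ 3 + 50 * t ^ 2 + 80) * α ^ 2
        + (9 * t ^ 3 - 9 * t ^ 2 - 17) * α - 4 * t ^ 3 + 4 * t ^ 2 + 6)
    (a b c : Matrix (Fin 2) (Fin 2) ℂ)
    (ha : a = !![(2 * t ^ 3 + t ^ 2 + t + 2) / 5, 1;
                 (-t ^ 3 + t ^ 2 - 2) / 5, (-2 * t ^ 3 - t ^ 2 - t + 3) / 5])
    (hb : b = !![(-3 * t ^ 3 + t ^ 2 - 4 * t + 2) / 5, β;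
                 α, (3 * t ^ 3 - t ^ 2 + 4 * t - 2) / 5])
    (hc : c = !![t⁻¹, 0; 0, t]) :
    a.det = 1 ∧ b.det = 1 ∧ c.det = 1 ∧
    (a ^ 3 = 1 ∨ a ^ 3 = -1) ∧
    (b ^ 2 = 1 ∨ b ^ 2 = -1) ∧
    (c ^ 5 = 1 ∨ c ^ 5 = -1) ∧
    ((b * c⁻¹) ^ 3 = 1 ∨ (b * c⁻¹) ^ 3 = -1) ∧
    ((a * c⁻¹) ^ 2 = 1 ∨ (a * c⁻¹) ^ 2 = -1) ∧
    ((a * b) ^ 4 = 1 ∨ (a * b) ^ 4 = -1) := by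
  subst hβ ha hb hc
  have ht0 : t ≠ 0 := by rw [ht]; exact Complex.exp_ne_zero _
  have ht5 : t ^ 5 = -1 := by
    rw [ht, ← Complex.exp_nat_mul]
    rw [show ((5 : ℕ) : ℂ) * (Real.pi * Complex.I / 5) = Real.pi * Complex.I by
      push_cast; ring]
    exact Complex.exp_pi_mul_I
  have htim : t.im = Real.sin (Real.pi / 5) := by
    rw [ht, show (Real.pi * Complex.I / 5 : ℂ) = (↑(Real.pi / 5) : ℂ) * Complex.I by
      push_cast; ring]
    exact Complex.exp_ofReal_mul_I_im _
  have hsin : 0 < Real.sin (Real.pi / 5) := by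
    apply Real.sin_pos_of_pos_of_lt_pi
    · positivity
    · linarith [Real.pi_pos]
  have hmin : t ^ 4 - t ^ 3 + t ^ 2 - t + 1 = 0 := by
    have htne : t + 1 ≠ 0 := by
      intro h
      have h1 : t = -1 := by linear_combination h
      rw [h1] at htim
      simp at htim
      linarith [hsin]
    have hfac : (t + 1) * (t ^ 4 - t ^ 3 + t ^ 2 - t + 1) = 0 := by
      linear_combination ht5
    rcases mul_eq_zero.mp hfac with h | h
    · exact absurd h htne
    · exact h
  have htinv : t⁻¹ = -t ^ 3 + t ^ 2 - t + 1 := by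
    refine inv_eq_of_mul_eq_one_right ?_
    linear_combination -hmin
  have hcinv : (!![t⁻¹, 0; 0, t])⁻¹ = !![t, 0; 0, t⁻¹] := by
    refine Matrix.inv_eq_left_inv ?_
    ext i j
    fin_cases i <;> fin_cases j <;>
      simp [Matrix.mul_apply, Fin.sum_univ_two, Matrix.one_apply, ht0]
  -- determinant entry identities
  have hdeta' : (2 * t ^ 3 + t ^ 2 + t + 2) / 5 * ((-2 * t ^ 3 - t ^ 2 - t + 3) / 5)
      - 1 * ((-t ^ 3 + t ^ 2 - 2) / 5) = 1 := by
    linear_combination ((-4/25)*t^2 + (-8/25)*t^1 + (-9/25)) * hmin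
  have hdetb' : (-3 * t ^ 3 + t ^ 2 - 4 * t + 2) / 5 * ((3 * t ^ 3 - t ^ 2 + 4 * t - 2) / 5)
      - ((-20 * t ^ 3 + 20 * t ^ 2 + 35) * α ^ 3 + (-50 * t ^ 3 + 50 * t ^ 2 + 80) * α ^ 2
        + (9 * t ^ 3 - 9 * t ^ 2 - 17) * α - 4 * t ^ 3 + 4 * t ^ 2 + 6) * α = 1 := by
    linear_combination ((20)*t^3 + (-20)*t^2 + (-35)) * hα + ((24)*t^2*α^3 + (4)*t^2*α^2 + (16/5)*t^2*α^1 + (-69/25)*t^2 + (-24)*t^1*α^3 + (-4)*t^1*α^2 + (-16/5)*t^1*α^1 + (57/25)*t^1 + (-24)*α^3 + (-4)*α^2 + (-16/5)*α^1 + (41/25)) * hmin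
  refine ⟨?_, ?_, ?_, ?_, ?_, ?_, ?_, ?_, ?_⟩
  · rw [Matrix.det_fin_two_of]; exact hdeta'
  · rw [Matrix.det_fin_two_of]; exact hdetb'
  · rw [Matrix.det_fin_two_of]; field_simp; norm_num
  · right
    exact cube_neg_one _ _ _ _ hdeta' (by ring)
  · right
    exact sq_neg_one _ _ _ _ hdetb' (by ring)
  · right
    rw [htinv]
    rw [show (5 : ℕ) = 4 + 1 from rfl, pow_succ, show (4 : ℕ) = 3 + 1 from rfl, pow_succ,
      show (3 : ℕ) = 2 + 1 from rfl, pow_succ, pow_two]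
    ext i j
    fin_cases i <;> fin_cases j
    all_goals simp [Matrix.mul_apply, Fin.sum_univ_two, Matrix.one_apply]
    all_goals try linear_combination ((-1)*t^11 + (4)*t^10 + (-10)*t^9 + (20)*t^8 + (-30)*t^7 + (37)*t^6 + (-38)*t^5 + (30)*t^4 + (-20)*t^3 + (10)*t^2 + (-3)*t^1 + (2)) * hmin
    all_goals linear_combination (t + 1) * hmin
  · right
    rw [hcinv, htinv]
    have hprod : !![(-3 * t ^ 3 + t ^ 2 - 4 * t + 2) / 5,
          (-20 * t ^ 3 + 20 * t ^ 2 + 35) * α ^ 3 + (-50 * t ^ 3 + 50 * t ^ 2 + 80) * α ^ 2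
            + (9 * t ^ 3 - 9 * t ^ 2 - 17) * α - 4 * t ^ 3 + 4 * t ^ 2 + 6;
          α, (3 * t ^ 3 - t ^ 2 + 4 * t - 2) / 5] * !![t, 0; 0, -t ^ 3 + t ^ 2 - t + 1]
        = !![(-3 * t ^ 3 + t ^ 2 - 4 * t + 2) / 5 * t,
            ((-20 * t ^ 3 + 20 * t ^ 2 + 35) * α ^ 3 + (-50 * t ^ 3 + 50 * t ^ 2 + 80) * α ^ 2
            + (9 * t ^ 3 - 9 * t ^ 2 - 17) * α - 4 * t ^ 3 + 4 * t ^ 2 + 6)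
              * (-t ^ 3 + t ^ 2 - t + 1);
            α * t, (3 * t ^ 3 - t ^ 2 + 4 * t - 2) / 5 * (-t ^ 3 + t ^ 2 - t + 1)] := by
      rw [Matrix.mul_fin_two]
      ext i j
      fin_cases i <;> fin_cases j
      all_goals simp
      all_goals try ring
    rw [hprod]
    refine cube_neg_one _ _ _ _ ?_ ?_
    · linear_combination ((-20)*t^7 + (40)*t^6 + (-40)*t^5 + (75)*t^4 + (-55)*t^3 + (35)*t^2 + (-35)*t^1) * hα + ((-24)*t^6*α^3 + (-4)*t^6*α^2 + (-16/5)*t^6*α^1 + (69/25)*t^6 + (48)*t^5*α^3 + (8)*t^5*α^2 + (32/5)*t^5*α^1 + (-126/25)*t^5 + (-24)*t^4*α^3 + (-4)*t^4*α^2 + (-16/5)*t^4*α^1 + (17/5)*t^4 + (24)*t^3*α^3 + (4)*t^3*α^2 + (16/5)*t^3*α^1 + (-17/5)*t^3 + (16/25)*t^2 + (-24)*t^1*α^3 + (-4)*t^1*α^2 + (-16/5)*t^1*α^1 + (41/25)*t^1 + (-1)) * hmin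
    · linear_combination ((-3/5)*t^2 + (1/5)*t^1 + (-7/5)) * hmin
  · right
    rw [hcinv, htinv]
    have hprod : !![(2 * t ^ 3 + t ^ 2 + t + 2) / 5, 1;
          (-t ^ 3 + t ^ 2 - 2) / 5, (-2 * t ^ 3 - t ^ 2 - t + 3) / 5]
          * !![t, 0; 0, -t ^ 3 + t ^ 2 - t + 1]
        = !![(2 * t ^ 3 + t ^ 2 + t + 2) / 5 * t, 1 * (-t ^ 3 + t ^ 2 - t + 1);
            (-t ^ 3 + t ^ 2 - 2) / 5 * t,
            (-2 * t ^ 3 - t ^ 2 - t + 3) / 5 * (-t ^ 3 + t ^ 2 - t + 1)] := by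
      rw [Matrix.mul_fin_two]
      ext i j
      fin_cases i <;> fin_cases j
      all_goals simp
      all_goals try ring
    rw [hprod]
    refine sq_neg_one _ _ _ _ ?_ ?_
    · linear_combination ((4/25)*t^6 + (4/25)*t^5 + (1/5)*t^4 + (-1/5)*t^3 + (1/25)*t^2 + (-9/25)*t^1 + (-1)) * hmin
    · linear_combination ((2/5)*t^2 + (1/5)*t^1 + (3/5)) * hmin
  · right
    have hprod : !![(2 * t ^ 3 + t ^ 2 + t + 2) / 5, 1;
          (-t ^ 3 + t ^ 2 - 2) / 5, (-2 * t ^ 3 - t ^ 2 - t + 3) / 5]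
          * !![(-3 * t ^ 3 + t ^ 2 - 4 * t + 2) / 5,
          (-20 * t ^ 3 + 20 * t ^ 2 + 35) * α ^ 3 + (-50 * t ^ 3 + 50 * t ^ 2 + 80) * α ^ 2
            + (9 * t ^ 3 - 9 * t ^ 2 - 17) * α - 4 * t ^ 3 + 4 * t ^ 2 + 6;
          α, (3 * t ^ 3 - t ^ 2 + 4 * t - 2) / 5]
        = !![(2 * t ^ 3 + t ^ 2 + t + 2) / 5 * ((-3 * t ^ 3 + t ^ 2 - 4 * t + 2) / 5) + α,
            (2 * t ^ 3 + t ^ 2 + t + 2) / 5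
              * ((-20 * t ^ 3 + 20 * t ^ 2 + 35) * α ^ 3
                + (-50 * t ^ 3 + 50 * t ^ 2 + 80) * α ^ 2
                + (9 * t ^ 3 - 9 * t ^ 2 - 17) * α - 4 * t ^ 3 + 4 * t ^ 2 + 6)
              + (3 * t ^ 3 - t ^ 2 + 4 * t - 2) / 5;
            (-t ^ 3 + t ^ 2 - 2) / 5 * ((-3 * t ^ 3 + t ^ 2 - 4 * t + 2) / 5)
              + (-2 * t ^ 3 - t ^ 2 - t + 3) / 5 * α,
            (-t ^ 3 + t ^ 2 - 2) / 5
              * ((-20 * t ^ 3 + 20 * t ^ 2 + 35) * α ^ 3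
                + (-50 * t ^ 3 + 50 * t ^ 2 + 80) * α ^ 2
                + (9 * t ^ 3 - 9 * t ^ 2 - 17) * α - 4 * t ^ 3 + 4 * t ^ 2 + 6)
              + (-2 * t ^ 3 - t ^ 2 - t + 3) / 5 * ((3 * t ^ 3 - t ^ 2 + 4 * t - 2) / 5)] := by
      rw [Matrix.mul_fin_two]
      ext i j
      fin_cases i <;> fin_cases j
      all_goals simp
      all_goals try ring
    rw [hprod]
    refine pow4_neg_one _ _ _ _ ?_ ?_
    · linear_combination ((-16/5)*t^9 + (-4/5)*t^7 + (68/5)*t^6 + (-12/5)*t^5 + (59/5)*t^4 + (5)*t^3 + (-29/5)*t^2 + (-7/5)*t^1 + (-112/5)) * hα + ((-96/25)*t^8*α^3 + (-16/25)*t^8*α^2 + (-64/125)*t^8*α^1 + (276/625)*t^8 + (48/625)*t^7 + (72/25)*t^6*α^3 + (12/25)*t^6*α^2 + (48/125)*t^6*α^1 + (-47/625)*t^6 + (336/25)*t^5*α^3 + (56/25)*t^5*α^2 + (224/125)*t^5*α^1 + (-794/625)*t^5 + (-24/5)*t^4*α^3 + (-4/5)*t^4*α^2 + (-16/25)*t^4*α^1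 + (17/25)*t^4 + (24/25)*t^3*α^3 + (4/25)*t^3*α^2 + (16/125)*t^3*α^1 + (-149/625)*t^3 + (96/5)*t^2*α^3 + (16/5)*t^2*α^2 + (64/25)*t^2*α^1 + (-1352/625)*t^2 + (-408/25)*t^1*α^3 + (-68/25)*t^1*α^2 + (-272/125)*t^1*α^1 + (753/625)*t^1 + (-384/25)*α^3 + (-64/25)*α^2 + (-256/125)*α^1 + (431/625)) * hmin
    · linear_combination ((576/25)*t^18 + (-3456/25)*t^17 + (1728/5)*t^16 + (96/5)*t^15*α^1 + (-10288/25)*t^15 + (-96)*t^14*α^1 + (496/5)*t^14 + (192)*t^13*α^1 + (8864/25)*t^13 + (16)*t^12*α^2 + (-128)*t^12*α^1 + (-14704/25)*t^12 + (-64)*t^11*α^2 + (-160)*t^11*α^1 + (720)*t^11 + (96)*t^10*α^2 + (1824/5)*t^10*α^1 + (-18992/25)*t^10 + (-56)*t^9*α^2 + (-350)*t^9*α^1 + (1103/5)*t^9 + (-8)*t^8*α^2 + (346)*t^8*α^1 + (3203/5)*t^8 + (24)*t^7*α^2 + (-282)*t^7*α^1 + (-759)*t^7 + (-119)*t^6*α^2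 + (-290)*t^6*α^1 + (2042/5)*t^6 + (222)*t^5*α^2 + (768)*t^5*α^1 + (-1554/5)*t^5 + (-111)*t^4*α^2 + (-384)*t^4*α^1 + (777/5)*t^4 + (-28)*t^3*α^2 + (104)*t^3*α^1 + (8002/25)*t^3 + (28)*t^2*α^2 + (-104)*t^2*α^1 + (-8002/25)*t^2 + (196)*α^2 + (2912/5)*α^1 + (-216/25)) * hα + ((3456/125)*t^17*α^3 + (576/125)*t^17*α^2 + (2304/625)*t^17*α^1 + (-1728/625)*t^17 + (-20736/125)*t^16*α^3 + (-3456/125)*t^16*α^2 + (-13824/625)*t^16*α^1 + (10368/625)*t^16 + (48384/125)*t^15*α^3 + (8064/125)*t^15*α^2 + (32256/625)*t^15*α^1 + (-24192/625)*t^15 + (-9024/25)*t^14*α^3 + (-944/25)*t^14*α^2 + (-5984/125)*t^14*α^1 + (19344/625)*t^14 + (-3264/25)*t^13*α^3 + (-3344/25)*t^13*α^2 + (-2336/125)*t^13*α^1 + (4848/125)*t^13 + (74304/125)*t^12*α^3 + (37584/125)*t^12*α^2 + (50976/625)*t^12*α^1 + (-66096/625)*t^12 + (-68224/125)*t^11*α^3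 + (-19744/125)*t^11*α^2 + (-50176/625)*t^11*α^1 + (8896/125)*t^11 + (53056/125)*t^10*α^3 + (-27664/125)*t^10*α^2 + (50144/625)*t^10*α^1 + (496/25)*t^10 + (-10048/25)*t^9*α^3 + (8432/25)*t^9*α^2 + (-10336/125)*t^9*α^1 + (-29168/625)*t^9 + (-128)*t^8*α^3 + (-672/5)*t^8*α^2 + (-26)*t^8*α^1 + (24959/625)*t^8 + (3888/5)*t^7*α^3 + (1128/25)*t^7*α^2 + (20554/125)*t^7*α^1 + (-369/5)*t^7 + (-12016/25)*t^6*α^3 + (-1144/25)*t^6*α^2 + (-2568/25)*t^6*α^1 + (32066/625)*t^6 + (-244/5)*t^5*α^3 + (-4491/25)*t^5*α^2 + (-1076/125)*t^5*α^1 + (33973/625)*t^5 + (-1884/25)*t^4*α^3 + (8414/25)*t^4*α^2 + (-3642/125)*t^4*α^1 + (-48767/625)*t^4 + (-16/25)*t^3*α^3 + (-64/25)*t^3*α^2 + (16/125)*t^3*α^1 + (-176/625)*t^3 + (30952/125)*t^2*α^3 + (-26628/125)*t^2*α^2 + (62398/625)*t^2*α^1 + (16288/625)*t^2 + (-11392/125)*t^1*α^3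 + (16453/125)*t^1*α^2 + (-49748/625)*t^1*α^1 + (2034/625)*t^1 + (-10272/125)*α^3 + (19013/125)*α^2 + (-52868/625)*α^1 + (3026/625)) * hmin
end
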